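/- arXiv:1208.2312 — 2 statements merged into one kernel-verified Lean document; each statement's English description precedes it below -/
import Mathlib

section
/- Let X → L → Y → X[1] be a distinguished triangle in a triangulated category over a finite field with all Hom spaces finite, and let Z be any object. Applying Hom(−, Z[1]) yields an exact sequence Hom(Y,Z[1]) →^u Hom(L,Z[1]) →^v Hom(X,Z[1]), and the image of u has cardinality |Hom(Y, Z[1])| · {X ⊕ Y, Z[1]} · {L, Z[1]}^{-1}, where {A,B} = Π_{i>0} |Hom(A[i],B)|^{(-1)^i}. -/
/-!
STATEMENT 11.  For a distinguished triangle `X →f L →g Y →h X[1]` and any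
object `Z`, applying `Hom(−,Z[1])` gives an exact sequence
`Hom(Y,Z[1]) →u Hom(L,Z[1]) →v Hom(X,Z[1])` (`u = (g ≫ ·)`, `v = (f ≫ ·)`,
exactness: `range u = ker v`), and
`|Im u| = |Hom(Y,Z[1])| · {X ⊕ Y, Z[1]} · {L,Z[1]}⁻¹`.
-/

open CategoryTheory Category Limits Pretriangulated

variable {C : Type*} [Category C] [Preadditive C] [HasZeroObject C]
  [HasShift C ℤ] [∀ n : ℤ, (CategoryTheory.shiftFunctor C n).Additive] [Pretriangulated C]

/-- `Hom(A,B)_Z`: the set of morphisms `A ⟶ B` whose (mapping) cone is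
isomorphic to `Z`, i.e. which fit into a distinguished triangle
`A ⟶ B ⟶ Z ⟶ A[1]`. -/
def coneSet (A B Z : C) : Set (A ⟶ B) :=
  {f | ∃ (g : B ⟶ Z) (h : Z ⟶ A⟦(1:ℤ)⟧),
    Pretriangulated.Triangle.mk f g h ∈ Pretriangulated.distinguishedTriangles}

/-- `{A,B} := ∏_{i>0} |Hom(A[i],B)|^{(-1)^i}` (a finite product under the
homological finiteness assumption, formalized as a `finprod`). -/
noncomputable def br (A B : C) : ℚ :=
  ∏ᶠ i : ℕ, if 0 < i then (Nat.card ((A⟦(i:ℤ)⟧) ⟶ B) : ℚ) ^ ((-1:ℤ) ^ i) else 1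

/-- `|Aut X|` as a rational number. -/
noncomputable def nAut (X : C) : ℚ := Nat.card (Aut X)

/-- `|Hom(A,B)_Z|` as a rational number. -/
noncomputable def nCone (A B Z : C) : ℚ := Nat.card ↥(coneSet A B Z)

/-- An object is indecomposable iff it is nonzero and its endomorphism ring
has no nontrivial idempotents. -/
def Indec (X : C) : Prop :=
  ¬ Limits.IsZero X ∧ ∀ e : X ⟶ X, e ≫ e = e → e = 0 ∨ e = 𝟙 X

/-- Locality of the endomorphism ring of an object. -/
def LocalEnd (X : C) : Prop :=
  ∀ e : X ⟶ X, IsIso e ∨ IsIso (𝟙 X - e)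


/-!
Rotating `X → L → Y → X[1]` and applying `Hom(−, B)`, `B = Z[1]`, gives a long exact sequence
`Hom(L,B) ← Hom(E₀,B) ← Hom(E₁,B) ← Hom(E₂,B) ← ⋯`, where
`E₀, E₁, E₂, … = Y, X[1], L[1], Y[1], X[2], …`. If `rₙ` is the size of the image of
`Hom(Eₙ,B) → Hom(Eₙ₋₁,B)`, exactness gives `|Hom(Eₙ,B)| = rₙ rₙ₊₁`, and `rₙ = 1` for large `n`.
Telescoping, `|Im u| = r₀` is the alternating product of the `|Hom(Eₙ,B)|`; grouping its factors
by shift degree gives `|Hom(Y,B)| {X,B} {Y,B} {L,B}⁻¹`, and `{X ⊕ Y, B} = {X,B} {Y,B}`.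
-/

theorem AddMonoidHom.card_range_mul_card_ker {A B : Type*} [AddGroup A] [AddGroup B]
    (φ : A →+ B) : Nat.card φ.range * Nat.card φ.ker = Nat.card A := by
  rw [← AddSubgroup.index_ker, mul_comm, AddSubgroup.card_mul_index]

theorem Finset.prod_range_three_mul {M : Type*} [CommMonoid M] (f : ℕ → M) (n : ℕ) :
    ∏ k ∈ range (3 * n), f k =
      ∏ i ∈ range n, f (3 * i) * f (3 * i + 1) * f (3 * i + 2) := by
  induction n with
  | zero => simp
  | succ n ih =>
    rw [show 3 * (n + 1) = 3 * n + 1 + 1 + 1 by ring, prod_range_succ, prod_range_succ,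
      prod_range_succ, ih, prod_range_succ]
    simp only [mul_assoc]

theorem eq_prod_range_zpow_mul_of_eq_mul_succ {K : Type*} [Field K] (r c : ℕ → K)
    (hr : ∀ n, r n ≠ 0) (hc : ∀ n, c n = r n * r (n + 1)) (N : ℕ) :
    r 0 = (∏ n ∈ Finset.range N, c n ^ (-1 : ℤ) ^ n) * r N ^ (-1 : ℤ) ^ N := by
  induction N with
  | zero => simp
  | succ N ih =>
    have hrN : r N = c N * (r (N + 1))⁻¹ := by rw [hc, mul_inv_cancel_right₀ (hr _)]
    rw [ih, hrN, Finset.prod_range_succ, mul_zpow, inv_zpow', mul_assoc, pow_succ, mul_neg_one]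

namespace CategoryTheory

lemma card_hom_eq_of_iso {C : Type*} [Category C] {P Q : C} (e : P ≅ Q) (B : C) :
    Nat.card (P ⟶ B) = Nat.card (Q ⟶ B) :=
  Nat.card_congr (e.homCongr (Iso.refl B))

lemma card_hom_biprod {C : Type*} [Category C] [Preadditive C] [HasBinaryBiproducts C]
    (P Q B : C) : Nat.card (P ⊞ Q ⟶ B) = Nat.card (P ⟶ B) * Nat.card (Q ⟶ B) := by
  rw [← Nat.card_prod]
  refine Nat.card_congr ⟨fun s => (biprod.inl ≫ s, biprod.inr ≫ s),
    fun p => biprod.desc p.1 p.2, fun s => ?_, fun p => ?_⟩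
  · apply biprod.hom_ext' <;> simp
  · simp

lemma br_eq_prod_range {C : Type*} [Category C] [Preadditive C] [HasShift C ℤ] (A B : C)
    (M : ℕ) (hM : ∀ i : ℕ, M < i → Subsingleton (A⟦(i : ℤ)⟧ ⟶ B)) :
    br A B = ∏ i ∈ Finset.range M,
      (Nat.card (A⟦((i + 1 : ℕ) : ℤ)⟧ ⟶ B) : ℚ) ^ (-1 : ℤ) ^ (i + 1) := by
  rw [br, finprod_eq_prod_of_mulSupport_subset _ (s := Finset.range (M + 1)) ?_,
    Finset.prod_range_succ']
  · simp
  · intro i hi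
    by_contra hiM
    have : Subsingleton (A⟦(i : ℤ)⟧ ⟶ B) := hM i (by simpa using hiM)
    exact hi (by simp)

lemma br_biprod {C : Type*} [Category C] [Preadditive C] [HasShift C ℤ]
    [∀ n : ℤ, (shiftFunctor C n).Additive] [HasBinaryBiproducts C] (A A' B : C) (M : ℕ)
    (hA : ∀ i : ℕ, M < i → Subsingleton (A⟦(i : ℤ)⟧ ⟶ B))
    (hA' : ∀ i : ℕ, M < i → Subsingleton (A'⟦(i : ℤ)⟧ ⟶ B)) :
    br (A ⊞ A') B = br A B * br A' B := by
  have (n : ℤ) : PreservesBinaryBiproducts (shiftFunctor C n) :=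
    preservesBinaryBiproducts_of_preservesBiproducts _
  have hcard (n : ℤ) :
      Nat.card ((A ⊞ A')⟦n⟧ ⟶ B) = Nat.card (A⟦n⟧ ⟶ B) * Nat.card (A'⟦n⟧ ⟶ B) :=
    (card_hom_eq_of_iso ((shiftFunctor C n).mapBiprod A A') B).trans (card_hom_biprod _ _ B)
  rw [br_eq_prod_range A B M hA, br_eq_prod_range A' B M hA',
    br_eq_prod_range (A ⊞ A') B M ?_, ← Finset.prod_mul_distrib]
  · simp only [hcard, Nat.cast_mul, mul_zpow]
  · intro i hi
    have := hA i hi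
    have := hA' i hi
    refine (Nat.card_eq_one_iff_unique.mp ?_).1
    rw [hcard, Nat.card_of_subsingleton 0, Nat.card_of_subsingleton 0]

namespace Pretriangulated.Triangle

section

variable {C : Type*} [Category C] [Preadditive C] [HasShift C ℤ]

noncomputable def precompRangeCard (T : Triangle C) (B : C) : ℕ :=
  Nat.card (Set.range fun t : T.obj₂ ⟶ B => T.mor₁ ≫ t)

lemma precompRangeCard_pos (T : Triangle C) (B : C) [Finite (T.obj₁ ⟶ B)] :
    0 < T.precompRangeCard B :=
  have : Nonempty (Set.range fun t : T.obj₂ ⟶ B => T.mor₁ ≫ t) := ⟨⟨_, 0, rfl⟩⟩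
  Nat.card_pos

lemma precompRangeCard_eq_one (T : Triangle C) (B : C) [Subsingleton (T.obj₁ ⟶ B)] :
    T.precompRangeCard B = 1 :=
  Nat.card_eq_one_iff_unique.mpr ⟨inferInstance, ⟨⟨_, 0, rfl⟩⟩⟩

def iterRotate (T : Triangle C) : ℕ → Triangle C
  | 0 => T
  | n + 1 => (iterRotate T n).rotate

section

variable [∀ n : ℤ, (CategoryTheory.shiftFunctor C n).Additive]

noncomputable def iterRotateThreeMulIso (T : Triangle C) :
    ∀ i : ℕ, T.iterRotate (3 * i) ≅ (Triangle.shiftFunctor C i).obj T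
  | 0 => (Triangle.shiftFunctorZero C).symm.app T
  | i + 1 => (rotateRotateRotateIso C).app (T.iterRotate (3 * i)) ≪≫
      (Triangle.shiftFunctor C 1).mapIso (iterRotateThreeMulIso T i) ≪≫
      ((Triangle.shiftFunctorAdd' C i 1 (i + 1 : ℕ) (by push_cast; rfl)).app T).symm

lemma card_hom_iterRotate_three_mul_add_one_obj₂ (T : Triangle C) (B : C) (i : ℕ) :
    Nat.card ((T.iterRotate (3 * i + 1)).obj₂ ⟶ B) = Nat.card (T.obj₃⟦(i : ℤ)⟧ ⟶ B) :=
  card_hom_eq_of_iso (π₃.mapIso (T.iterRotateThreeMulIso i)) B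

lemma card_hom_iterRotate_three_mul_add_two_obj₂ (T : Triangle C) (B : C) (i : ℕ) :
    Nat.card ((T.iterRotate (3 * i + 2)).obj₂ ⟶ B) =
      Nat.card (T.obj₁⟦((i + 1 : ℕ) : ℤ)⟧ ⟶ B) :=
  card_hom_eq_of_iso (π₁.mapIso (T.iterRotateThreeMulIso (i + 1))) B

lemma card_hom_iterRotate_three_mul_add_three_obj₂ (T : Triangle C) (B : C) (i : ℕ) :
    Nat.card ((T.iterRotate (3 * i + 3)).obj₂ ⟶ B) =
      Nat.card (T.obj₂⟦((i + 1 : ℕ) : ℤ)⟧ ⟶ B) :=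
  card_hom_eq_of_iso (π₂.mapIso (T.iterRotateThreeMulIso (i + 1))) B

end

end

lemma exists_mor₂_comp_eq_iff {T : Triangle C} (hT : T ∈ distTriang C) {B : C}
    (s : T.obj₂ ⟶ B) : (∃ t : T.obj₃ ⟶ B, T.mor₂ ≫ t = s) ↔ T.mor₁ ≫ s = 0 := by
  refine ⟨?_, fun hs => ?_⟩
  · rintro ⟨t, rfl⟩
    rw [← assoc, comp_distTriang_mor_zero₁₂ T hT, zero_comp]
  · obtain ⟨t, ht⟩ := T.yoneda_exact₂ hT s hs
    exact ⟨t, ht.symm⟩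

lemma card_hom_obj₂ {T : Triangle C} (hT : T ∈ distTriang C) (B : C) :
    Nat.card (T.obj₂ ⟶ B) = T.precompRangeCard B * T.rotate.precompRangeCard B := by
  rw [← (Preadditive.leftComp B T.mor₁).card_range_mul_card_ker]
  have hker : ((Preadditive.leftComp B T.mor₁).ker : Set (T.obj₂ ⟶ B)) =
      Set.range fun t : T.obj₃ ⟶ B => T.mor₂ ≫ t := by
    ext s
    exact (exists_mor₂_comp_eq_iff hT s).symm
  exact congrArg₂ (· * ·) rfl (Nat.card_congr (Equiv.setCongr hker))

lemma iterRotate_mem {T : Triangle C} (hT : T ∈ distTriang C) (n : ℕ) :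
    T.iterRotate n ∈ distTriang C := by
  induction n with
  | zero => exact hT
  | succ n ih => exact rot_of_distTriang _ ih

theorem precompRangeCard_rotate_eq_prod [∀ A A' : C, Finite (A ⟶ A')] {T : Triangle C}
    (hT : T ∈ distTriang C) (B : C) (M : ℕ) [Subsingleton (T.obj₂⟦(M : ℤ)⟧ ⟶ B)] :
    (T.rotate.precompRangeCard B : ℚ) = ∏ i ∈ Finset.range M,
      (Nat.card (T.obj₃⟦(i : ℤ)⟧ ⟶ B) : ℚ) ^ (-1 : ℤ) ^ i *
      (Nat.card (T.obj₁⟦((i + 1 : ℕ) : ℤ)⟧ ⟶ B) : ℚ) ^ (-(-1 : ℤ) ^ i) *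
      (Nat.card (T.obj₂⟦((i + 1 : ℕ) : ℤ)⟧ ⟶ B) : ℚ) ^ (-1 : ℤ) ^ i := by
  have hr (n : ℕ) : ((T.iterRotate (n + 1)).precompRangeCard B : ℚ) ≠ 0 :=
    Nat.cast_ne_zero.mpr (precompRangeCard_pos _ B).ne'
  have hc (n : ℕ) : (Nat.card ((T.iterRotate (n + 1)).obj₂ ⟶ B) : ℚ) =
      (T.iterRotate (n + 1)).precompRangeCard B *
        (T.iterRotate (n + 1 + 1)).precompRangeCard B := by
    exact_mod_cast card_hom_obj₂ (iterRotate_mem hT (n + 1)) B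
  have hr_last : ((T.iterRotate (3 * M + 1)).precompRangeCard B : ℚ) = 1 := by
    have : Subsingleton ((T.iterRotate (3 * M + 1)).obj₁ ⟶ B) :=
      ((π₂.mapIso (T.iterRotateThreeMulIso M)).homCongr (Iso.refl B)).subsingleton
        (β := T.obj₂⟦(M : ℤ)⟧ ⟶ B)
    rw [precompRangeCard_eq_one, Nat.cast_one]
  have htele := eq_prod_range_zpow_mul_of_eq_mul_succ _ _ hr hc (3 * M)
  rw [hr_last, one_zpow, mul_one, Finset.prod_range_three_mul] at htele
  refine htele.trans (Finset.prod_congr rfl fun i _ => ?_)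
  have s₀ : (-1 : ℤ) ^ (3 * i) = (-1) ^ i := by rw [pow_mul]; norm_num
  have s₁ : (-1 : ℤ) ^ (3 * i + 1) = -(-1) ^ i := by rw [pow_succ, s₀, mul_neg_one]
  have s₂ : (-1 : ℤ) ^ (3 * i + 2) = (-1) ^ i := by rw [pow_add, s₀]; norm_num
  have c₀ : (Nat.card ((T.iterRotate (3 * i + 1)).obj₂ ⟶ B) : ℚ) =
      Nat.card (T.obj₃⟦(i : ℤ)⟧ ⟶ B) :=
    congrArg Nat.cast (card_hom_iterRotate_three_mul_add_one_obj₂ T B i)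
  have c₁ : (Nat.card ((T.iterRotate (3 * i + 1 + 1)).obj₂ ⟶ B) : ℚ) =
      Nat.card (T.obj₁⟦((i + 1 : ℕ) : ℤ)⟧ ⟶ B) :=
    congrArg Nat.cast (card_hom_iterRotate_three_mul_add_two_obj₂ T B i)
  have c₂ : (Nat.card ((T.iterRotate (3 * i + 2 + 1)).obj₂ ⟶ B) : ℚ) =
      Nat.card (T.obj₂⟦((i + 1 : ℕ) : ℤ)⟧ ⟶ B) :=
    congrArg Nat.cast (card_hom_iterRotate_three_mul_add_three_obj₂ T B i)
  rw [c₀, c₁, c₂, s₀, s₁, s₂]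

theorem card_range_mor₂_precomp [HasBinaryBiproducts C] [∀ A A' : C, Finite (A ⟶ A')]
    {T : Triangle C} (hT : T ∈ distTriang C) (B : C) (N : ℕ)
    (h₁ : ∀ i : ℕ, N ≤ i → Subsingleton (T.obj₁⟦(i : ℤ)⟧ ⟶ B))
    (h₂ : ∀ i : ℕ, N ≤ i → Subsingleton (T.obj₂⟦(i : ℤ)⟧ ⟶ B))
    (h₃ : ∀ i : ℕ, N ≤ i → Subsingleton (T.obj₃⟦(i : ℤ)⟧ ⟶ B)) :
    (Nat.card ↥(Set.range fun t : T.obj₃ ⟶ B => T.mor₂ ≫ t) : ℚ) =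
      Nat.card (T.obj₃ ⟶ B) * br (T.obj₁ ⊞ T.obj₃) B * (br T.obj₂ B)⁻¹ := by
  have : Subsingleton (T.obj₂⟦((N + 1 : ℕ) : ℤ)⟧ ⟶ B) := h₂ _ (by omega)
  have hY₀ : (Nat.card (T.obj₃ ⟶ B) : ℚ) =
      Nat.card (T.obj₃⟦((0 : ℕ) : ℤ)⟧ ⟶ B) :=
    congrArg Nat.cast (card_hom_eq_of_iso ((CategoryTheory.shiftFunctorZero C ℤ).symm.app _) B)
  rw [br_biprod _ _ B N (fun i hi => h₁ i hi.le) (fun i hi => h₃ i hi.le),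
    br_eq_prod_range T.obj₁ B (N + 1) (fun i hi => h₁ i (by omega)),
    br_eq_prod_range T.obj₃ B N (fun i hi => h₃ i hi.le),
    br_eq_prod_range T.obj₂ B (N + 1) (fun i hi => h₂ i (by omega))]
  change (T.rotate.precompRangeCard B : ℚ) = _
  rw [precompRangeCard_rotate_eq_prod hT B (N + 1), Finset.prod_mul_distrib,
    Finset.prod_mul_distrib, Finset.prod_range_succ' _ N, hY₀]
  simp only [pow_succ, mul_neg_one, zpow_neg, Finset.prod_inv_distrib, pow_zero, zpow_one,
    inv_inv]
  ring

end Pretriangulated.Triangle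

end CategoryTheory

theorem stmt11 [HasBinaryBiproducts C] (k : Type*) [Field k] [Finite k] [Linear k C]
    [∀ A B : C, Finite (A ⟶ B)]
    (hhom : ∀ A B : C, ∃ N : ℕ, ∀ i : ℕ, N ≤ i → Subsingleton ((A⟦(i:ℤ)⟧) ⟶ B))
    (X L Y Z : C)
    (f : X ⟶ L) (g : L ⟶ Y) (h : Y ⟶ X⟦(1:ℤ)⟧)
    (hdist : Pretriangulated.Triangle.mk f g h ∈ Pretriangulated.distinguishedTriangles) :
    (∀ s : L ⟶ Z⟦(1:ℤ)⟧, (∃ t : Y ⟶ Z⟦(1:ℤ)⟧, g ≫ t = s) ↔ f ≫ s = 0) ∧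
    (Nat.card ↥(Set.range fun t : Y ⟶ Z⟦(1:ℤ)⟧ => g ≫ t) : ℚ) =
      (Nat.card (Y ⟶ Z⟦(1:ℤ)⟧) : ℚ) * br (X ⊞ Y) (Z⟦(1:ℤ)⟧) * (br L (Z⟦(1:ℤ)⟧))⁻¹ := by
  obtain ⟨N₁, h₁⟩ := hhom X (Z⟦(1:ℤ)⟧)
  obtain ⟨N₂, h₂⟩ := hhom L (Z⟦(1:ℤ)⟧)
  obtain ⟨N₃, h₃⟩ := hhom Y (Z⟦(1:ℤ)⟧)
  exact ⟨Triangle.exists_mor₂_comp_eq_iff hdist,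
    Triangle.card_range_mor₂_precomp hdist _ (N₁ + N₂ + N₃) (fun i hi => h₁ i (by omega))
      (fun i hi => h₂ i (by omega)) (fun i hi => h₃ i (by omega))⟩
end

section
/- Let X ≅ n₁X₁ ⊕ ⋯ ⊕ n_tX_t be an object in a Krull-Schmidt k-linear category over a finite field k, with the X_i pairwise nonisomorphic indecomposables. Then |Aut X| = q^{Σ_{i≠j} dim_k Hom(n_iX_i, n_jX_j)} · Π_{i=1}^t |Aut(n_iX_i)|, where q = |k|. -/
/-!
STATEMENT 14.  Let `X ≅ n₁X₁ ⊕ ⋯ ⊕ n_tX_t` in a Krull-Schmidt `k`-linear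
category over a finite field `k` with `q` elements, with the `X i` pairwise
nonisomorphic indecomposables (with local endomorphism rings).  Then
`|Aut X| = q^{Σ_{i≠j} dim_k Hom(n_iX_i, n_jX_j)} · ∏_i |Aut(n_iX_i)|`.
-/

open CategoryTheory Category Limits

variable {C : Type*} [Category C] [Preadditive C] [HasFiniteBiproducts C]

/-!
Kelly's radical `rad(A, B) = {f | 𝟙 - f ≫ g is invertible for every g : B ⟶ A}` is an ideal of
the category, and a morphism of finite biproducts is radical as soon as all its components are.
Between nonisomorphic indecomposables with local endomorphism rings every morphism is radical, hence
so is every morphism `n_iX_i ⟶ n_jX_j` with `i ≠ j`. An endomorphism of `⨁ n_iX_i` therefore differs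
from its block diagonal by a radical morphism, so it is invertible iff its diagonal blocks are.
Automorphisms are thus block matrices with invertible diagonal blocks and arbitrary off-diagonal
blocks, and `|Hom(n_iX_i, n_jX_j)| = q ^ dim`.
-/

lemma Nat.card_subtype_pi_apply {ι : Type*} [Fintype ι] [DecidableEq ι] (β : ι → Type*) (i : ι)
    (P : β i → Prop) :
    Nat.card {r : ∀ j, β j // P (r i)} =
      (∏ j, if i ≠ j then Nat.card (β j) else 1) * Nat.card {x // P x} := by
  have e : {r : ∀ j, β j // P (r i)} ≃ {x // P x} × ∀ j : {j // j ≠ i}, β j :=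
    ((Equiv.piSplitAt i β).subtypeEquiv fun _ => Iff.rfl).trans
      Equiv.prodSubtypeFstEquivSubtypeProd
  rw [Nat.card_congr e, Nat.card_prod, Nat.card_pi, mul_comm, ← Finset.prod_filter,
    Finset.prod_subtype (p := (· ≠ i)) _ (fun j => by simp [ne_comm])]

lemma Nat.card_subtype_pi_pi_diag {ι : Type*} [Fintype ι] [DecidableEq ι] {T : ι → ι → Type*}
    (P : ∀ i, T i i → Prop) :
    Nat.card {M : ∀ i j, T i j // ∀ i, P i (M i i)} =
      (∏ i, ∏ j, if i ≠ j then Nat.card (T i j) else 1) * ∏ i, Nat.card {x // P i x} := by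
  have e : {M : ∀ i j, T i j // ∀ i, P i (M i i)} ≃ ∀ i, {r : ∀ j, T i j // P i (r i)} :=
    Equiv.subtypePiEquivPi (p := fun i (r : ∀ j, T i j) => P i (r i))
  rw [Nat.card_congr e, Nat.card_pi, ← Finset.prod_mul_distrib]
  exact Finset.prod_congr rfl fun i _ => Nat.card_subtype_pi_apply (T i) i (P i)

noncomputable def CategoryTheory.Aut.equivSubtypeIsIso {𝒞 : Type*} [Category 𝒞] (A : 𝒞) :
    Aut A ≃ {f : A ⟶ A // IsIso f} where
  toFun α := ⟨α.hom, α.isIso_hom⟩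
  invFun f := haveI := f.2; asIso f.1
  left_inv _ := by ext; rfl
  right_inv _ := rfl

namespace CategoryTheory.Preadditive

variable {𝒞 : Type*} [Category 𝒞] [Preadditive 𝒞]

lemma isIso_id_sub_comp_swap {A B : 𝒞} {f : A ⟶ B} {g : B ⟶ A} (h : IsIso (𝟙 A - f ≫ g)) :
    IsIso (𝟙 B - g ≫ f) := by
  set u := inv (𝟙 A - f ≫ g)
  have hu : f ≫ g ≫ u = u - 𝟙 A := by
    have := IsIso.hom_inv_id (𝟙 A - f ≫ g)
    rw [sub_comp, id_comp, assoc] at this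
    rw [← this]; abel
  have hu' : u ≫ f ≫ g = u - 𝟙 A := by
    have := IsIso.inv_hom_id (𝟙 A - f ≫ g)
    rw [comp_sub, comp_id] at this
    rw [← this]; abel
  refine ⟨𝟙 B + g ≫ u ≫ f, ?_, ?_⟩
  · calc (𝟙 B - g ≫ f) ≫ (𝟙 B + g ≫ u ≫ f)
          = 𝟙 B - g ≫ f + g ≫ u ≫ f - g ≫ (f ≫ g ≫ u) ≫ f := by
          simp only [sub_comp, comp_add, id_comp, comp_id, assoc]; abel
      _ = 𝟙 B := by rw [hu, sub_comp, comp_sub, id_comp]; abel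
  · calc (𝟙 B + g ≫ u ≫ f) ≫ (𝟙 B - g ≫ f)
          = 𝟙 B - g ≫ f + g ≫ u ≫ f - g ≫ (u ≫ f ≫ g) ≫ f := by
          simp only [add_comp, comp_sub, id_comp, comp_id, assoc]; abel
      _ = 𝟙 B := by rw [hu', sub_comp, comp_sub, id_comp]; abel

/-- Kelly's radical of a preadditive category. -/
def radical (A B : 𝒞) : AddSubgroup (A ⟶ B) where
  carrier := {f | ∀ g : B ⟶ A, IsIso (𝟙 A - f ≫ g)}
  zero_mem' g := by simp only [zero_comp, sub_zero]; infer_instance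
  add_mem' {f f'} hf hf' g := by
    have := hf g
    have := hf' (g ≫ inv (𝟙 A - f ≫ g))
    have factor : 𝟙 A - (f + f') ≫ g = (𝟙 A - f' ≫ g ≫ inv (𝟙 A - f ≫ g)) ≫ (𝟙 A - f ≫ g) := by
      rw [sub_comp, id_comp, assoc, assoc, IsIso.inv_hom_id, comp_id, add_comp]; abel
    rw [factor]
    infer_instance
  neg_mem' {f} hf g := by simpa only [neg_comp, comp_neg] using hf (-g)

namespace radical

lemma comp_mem_right {A B D : 𝒞} {f : A ⟶ B} (hf : f ∈ radical A B) (h : B ⟶ D) :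
    f ≫ h ∈ radical A D :=
  fun g => by simpa only [assoc] using hf (h ≫ g)

lemma comp_mem_left {A B D : 𝒞} (h : D ⟶ A) {f : A ⟶ B} (hf : f ∈ radical A B) :
    h ≫ f ∈ radical D B := by
  intro g
  simpa only [assoc] using isIso_id_sub_comp_swap (f := f ≫ g) (g := h)
    (by simpa only [assoc] using hf (g ≫ h))

end radical

lemma isIso_add_of_mem_radical {A B : 𝒞} {g a : A ⟶ B} [IsIso g] (ha : a ∈ radical A B) :
    IsIso (g + a) := by
  have := neg_mem ha (inv g)
  rw [show g + a = (𝟙 A - (-a) ≫ inv g) ≫ g by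
    rw [sub_comp, id_comp, assoc, IsIso.inv_hom_id, comp_id, sub_neg_eq_add]]
  infer_instance

lemma isIso_add_iff_of_mem_radical {A B : 𝒞} {g a : A ⟶ B} (ha : a ∈ radical A B) :
    IsIso (g + a) ↔ IsIso g := by
  refine ⟨fun _ => ?_, fun _ => isIso_add_of_mem_radical ha⟩
  simpa using isIso_add_of_mem_radical (g := g + a) (neg_mem ha)

lemma mem_radical_of_components {J K : Type} [Fintype J] [Fintype K] {f : J → 𝒞} {g : K → 𝒞}
    [HasBiproduct f] [HasBiproduct g] (m : ⨁ f ⟶ ⨁ g)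
    (hm : ∀ j k, biproduct.ι f j ≫ m ≫ biproduct.π g k ∈ radical (f j) (g k)) :
    m ∈ radical (⨁ f) (⨁ g) := by
  have expand : m = ∑ j, ∑ k, biproduct.π f j ≫ (biproduct.ι f j ≫ m ≫ biproduct.π g k) ≫
      biproduct.ι g k := by
    conv_lhs => rw [← id_comp m, ← comp_id m, ← biproduct.total (f := f), ← biproduct.total (f := g)]
    simp only [sum_comp, comp_sum, assoc]
    exact Finset.sum_comm
  rw [expand]
  exact sum_mem fun j _ => sum_mem fun k _ =>
    radical.comp_mem_left _ (radical.comp_mem_right (hm j k) _)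

lemma isIso_biproduct_map_iff {J : Type*} {f g : J → 𝒞} [HasBiproduct f] [HasBiproduct g]
    (p : ∀ j, f j ⟶ g j) : IsIso (biproduct.map p) ↔ ∀ j, IsIso (p j) := by
  refine ⟨fun _ j => ⟨biproduct.ι g j ≫ inv (biproduct.map p) ≫ biproduct.π f j, ?_, ?_⟩,
    fun _ => (biproduct.mapIso fun j => asIso (p j)).isIso_hom⟩
  · rw [← biproduct.ι_map_assoc, IsIso.hom_inv_id_assoc, biproduct.ι_π_self]
  · rw [assoc, assoc, ← biproduct.map_π, IsIso.inv_hom_id_assoc, biproduct.ι_π_self]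

lemma isIso_iff_forall_isIso_diagonal {J : Type} [Fintype J] {Y : J → 𝒞} [HasBiproduct Y]
    (hY : ∀ i j, i ≠ j → ∀ u : Y i ⟶ Y j, u ∈ radical (Y i) (Y j)) (f : ⨁ Y ⟶ ⨁ Y) :
    IsIso f ↔ ∀ j, IsIso (biproduct.ι Y j ≫ f ≫ biproduct.π Y j) := by
  set d := biproduct.map fun j => biproduct.ι Y j ≫ f ≫ biproduct.π Y j
  have hrad : f - d ∈ radical _ _ := by
    refine mem_radical_of_components _ fun i j => ?_
    by_cases hij : i = j
    · subst hij
      simp [d]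
    · exact hY i j hij _
  rw [← isIso_biproduct_map_iff, ← isIso_add_iff_of_mem_radical (neg_mem hrad), ← sub_eq_add_neg,
    sub_sub_cancel]

lemma not_isIso_comp_of_isEmpty_iso {P Q : 𝒞} (hP : ¬ IsZero P)
    (hQ : ∀ e : Q ⟶ Q, e ≫ e = e → e = 0 ∨ e = 𝟙 Q) (hPQ : IsEmpty (P ≅ Q))
    (s : P ⟶ Q) (r : Q ⟶ P) : ¬ IsIso (s ≫ r) := by
  intro _
  -- `s` is a split mono, so `r' ≫ s` is an idempotent of `Q`
  set r' := r ≫ inv (s ≫ r)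
  have hsr' : s ≫ r' = 𝟙 P := by rw [← assoc, IsIso.hom_inv_id]
  have hidem : (r' ≫ s) ≫ (r' ≫ s) = r' ≫ s := by
    rw [assoc, ← assoc s, hsr', id_comp]
  rcases hQ _ hidem with h0 | h1
  · refine hP ((IsZero.iff_id_eq_zero P).mpr ?_)
    calc 𝟙 P = (s ≫ r') ≫ (s ≫ r') := by rw [hsr', id_comp]
      _ = s ≫ (r' ≫ s) ≫ r' := by simp only [assoc]
      _ = 0 := by rw [h0, zero_comp, comp_zero]
  · exact hPQ.false ⟨s, r', hsr', h1⟩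

lemma mem_radical_of_isEmpty_iso {P Q : 𝒞} (hP : ¬ IsZero P)
    (hPloc : ∀ e : P ⟶ P, IsIso e ∨ IsIso (𝟙 P - e))
    (hQ : ∀ e : Q ⟶ Q, e ≫ e = e → e = 0 ∨ e = 𝟙 Q) (hPQ : IsEmpty (P ≅ Q)) (s : P ⟶ Q) :
    s ∈ radical P Q :=
  fun r => (hPloc _).resolve_left (not_isIso_comp_of_isEmpty_iso hP hQ hPQ s r)

end CategoryTheory.Preadditive

open Preadditive

lemma natCard_aut_biproduct {J : Type} [Fintype J] [DecidableEq J] (Y : J → C)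
    (hY : ∀ i j, i ≠ j → ∀ u : Y i ⟶ Y j, u ∈ radical (Y i) (Y j)) :
    Nat.card (Aut (⨁ Y)) =
      (∏ i, ∏ j, if i ≠ j then Nat.card (Y i ⟶ Y j) else 1) * ∏ i, Nat.card (Aut (Y i)) := by
  have e : Aut (⨁ Y) ≃ {M : ∀ i j, Y i ⟶ Y j // ∀ i, IsIso (M i i)} :=
    (Aut.equivSubtypeIsIso _).trans <| biproduct.matrixEquiv.subtypeEquiv fun f =>
      isIso_iff_forall_isIso_diagonal hY f
  rw [Nat.card_congr e, Nat.card_subtype_pi_pi_diag]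
  simp only [Nat.card_congr (Aut.equivSubtypeIsIso _)]

theorem stmt14 (k : Type*) [Field k] [Fintype k] [Linear k C]
    [∀ A B : C, Finite (A ⟶ B)] [∀ A B : C, Module.Finite k (A ⟶ B)]
    (q : ℕ) (hq : Fintype.card k = q)
    (t : ℕ) (Xi : Fin t → C) (n : Fin t → ℕ)
    (hind : ∀ i, Indec (Xi i))
    (hlocal : ∀ i, ∀ e : Xi i ⟶ Xi i, IsIso e ∨ IsIso (𝟙 (Xi i) - e))
    (hpair : ∀ i j, i ≠ j → IsEmpty (Xi i ≅ Xi j))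
    (X : C) (hX : Nonempty (X ≅ ⨁ fun i => ⨁ fun _ : Fin (n i) => Xi i)) :
    Nat.card (Aut X) =
      q ^ (∑ i : Fin t, ∑ j : Fin t,
            if i ≠ j then
              Module.finrank k
                ((⨁ fun _ : Fin (n i) => Xi i) ⟶ (⨁ fun _ : Fin (n j) => Xi j))
            else 0) *
        ∏ i : Fin t, Nat.card (Aut (⨁ fun _ : Fin (n i) => Xi i)) := by
  obtain ⟨e⟩ := hX
  have hrad : ∀ i j, i ≠ j → ∀ u : (⨁ fun _ : Fin (n i) => Xi i) ⟶ (⨁ fun _ : Fin (n j) => Xi j),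
      u ∈ radical _ _ := fun i j hij u =>
    mem_radical_of_components u fun _ _ =>
      mem_radical_of_isEmpty_iso (hind i).1 (hlocal i) (hind j).2 (hpair i j hij) _
  rw [Nat.card_congr e.conjAut.toEquiv, natCard_aut_biproduct _ hrad]
  congr 1
  simp only [← Finset.prod_pow_eq_pow_sum, pow_ite, pow_zero, ← hq, ← Nat.card_eq_fintype_card,
    ← Module.natCard_eq_pow_finrank]
end
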